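/- Suppose φ₁ is a C¹ Koopman eigenfunction with purely imaginary eigenvalue λ₁ = iω, with |φ₁| constant nonzero and argument θ = ∠φ₁ of class C¹, and φ₂, …, φₙ are C¹ Koopman eigenfunctions with Re(λⱼ) ≤ 0 for j ≥ 2. Define K(x) = { δx : Dθ(x)[δx] − |Dφⱼ(x)[δx]| ≥ 0 for all j ≥ 2 }. Then Dₓψ(t,x)[K(x)] ⊆ K(ψ(t,x)) for all t > 0 and all x. -/

import Mathlib

/-!
Differentiating an eigenfunction relation `u ∘ ψₜ = c · u` along the flow gives
`Du(ψₜ x) (Dψₜ δx) = c · Du(x) δx`. For `φ₁ = r e^{iθ}` one has `Dφ₁ = i φ₁ Dθ`, and since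
`φ₁(ψₜ x) = e^{iωt} φ₁(x)` is nonzero the factor `e^{iωt}` cancels: `Dθ` is transported
unchanged. For the other eigenfunctions `|e^{λⱼ t}| ≤ 1` when `Re λⱼ ≤ 0` and `t ≥ 0`, so
`|Dφⱼ|` can only decrease. Both halves of the cone inequality therefore move in the right
direction.
-/

open Complex

section Eigenfunction

variable {𝕜 E 𝔸 : Type*} [NontriviallyNormedField 𝕜] [NormedAddCommGroup E] [NormedSpace 𝕜 E]
  [NormedRing 𝔸] [NormedAlgebra 𝕜 𝔸]

theorem fderiv_apply_fderiv_eq_mul_of_comp_eq_mul {g : E → E} {u : E → 𝔸} {c : 𝔸} {x : E}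
    (hu : Differentiable 𝕜 u) (hg : DifferentiableAt 𝕜 g x)
    (h : ∀ y, u (g y) = c * u y) (v : E) :
    fderiv 𝕜 u (g x) (fderiv 𝕜 g x v) = c * fderiv 𝕜 u x v := by
  have hcomp := fderiv_comp x (hu (g x)) hg
  rw [show u ∘ g = fun y => c * u y from funext h, fderiv_const_mul (hu x)] at hcomp
  exact (congrArg (· v) hcomp).symm

theorem norm_fderiv_apply_fderiv_le_of_comp_eq_mul {g : E → E} {u : E → 𝔸} {c : 𝔸} {x : E}
    (hu : Differentiable 𝕜 u) (hg : DifferentiableAt 𝕜 g x)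
    (h : ∀ y, u (g y) = c * u y) (hc : ‖c‖ ≤ 1) (v : E) :
    ‖fderiv 𝕜 u (g x) (fderiv 𝕜 g x v)‖ ≤ ‖fderiv 𝕜 u x v‖ := by
  rw [fderiv_apply_fderiv_eq_mul_of_comp_eq_mul hu hg h]
  calc ‖c * fderiv 𝕜 u x v‖ ≤ ‖c‖ * ‖fderiv 𝕜 u x v‖ := norm_mul_le _ _
    _ ≤ ‖fderiv 𝕜 u x v‖ := mul_le_of_le_one_left (norm_nonneg _) hc

end Eigenfunction

section Phase

variable {E : Type*} [NormedAddCommGroup E] [NormedSpace ℝ E] {φ : E → ℂ} {θ : E → ℝ} {r : ℝ}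

theorem hasFDerivAt_of_eq_mul_exp_I_mul (hmod : ∀ y, φ y = r * exp (I * θ y)) {z : E}
    (hθ : DifferentiableAt ℝ θ z) :
    HasFDerivAt φ ((I * φ z) • ofRealCLM.comp (fderiv ℝ θ z)) z := by
  have hexp := ((ofRealCLM.hasFDerivAt.comp z hθ.hasFDerivAt).const_mul I).cexp.const_mul (r : ℂ)
  refine (hexp.congr_of_eventuallyEq (.of_forall hmod)).congr_fderiv ?_
  ext
  simp [hmod]
  ring

theorem fderiv_apply_fderiv_eq_of_eq_mul_exp_I_mul {g : E → E} {c : ℂ} {x : E}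
    (hmod : ∀ y, φ y = r * exp (I * θ y)) (hr : r ≠ 0) (hθ : Differentiable ℝ θ)
    (hg : DifferentiableAt ℝ g x) (h : ∀ y, φ (g y) = c * φ y) (v : E) :
    fderiv ℝ θ (g x) (fderiv ℝ g x v) = fderiv ℝ θ x v := by
  have hφ' : ∀ z w, fderiv ℝ φ z w = I * φ z * fderiv ℝ θ z w := fun z w => by
    simp [(hasFDerivAt_of_eq_mul_exp_I_mul hmod (hθ z)).fderiv]
  have hφ : Differentiable ℝ φ := fun z =>
    (hasFDerivAt_of_eq_mul_exp_I_mul hmod (hθ z)).differentiableAt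
  have hφgx : I * φ (g x) ≠ 0 := by
    rw [hmod]; exact mul_ne_zero I_ne_zero (mul_ne_zero (ofReal_ne_zero.2 hr) (exp_ne_zero _))
  have hchain := fderiv_apply_fderiv_eq_mul_of_comp_eq_mul hφ hg h v
  rw [hφ', hφ'] at hchain
  have hcancel :
      I * φ (g x) * fderiv ℝ θ (g x) (fderiv ℝ g x v) = I * φ (g x) * fderiv ℝ θ x v := by
    rw [hchain, h]; ring
  exact_mod_cast mul_left_cancel₀ hφgx hcancel

end Phase

theorem norm_exp_mul_ofReal_le_one {lam : ℂ} (hlam : lam.re ≤ 0) {t : ℝ} (ht : 0 ≤ t) :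
    ‖exp (lam * t)‖ ≤ 1 := by
  rw [norm_exp, re_mul_ofReal, Real.exp_le_one_iff]
  exact mul_nonpos_of_nonpos_of_nonneg hlam ht

theorem stmt6_general {n m : ℕ} (ψ : ℝ → (Fin n → ℝ) → (Fin n → ℝ))
    (hψC : ∀ t, ContDiff ℝ 1 (ψ t))
    (φ₁ : (Fin n → ℝ) → ℂ) (ω : ℝ) (θ : (Fin n → ℝ) → ℝ) (r : ℝ) (hr : 0 < r)
    (φ : Fin m → ((Fin n → ℝ) → ℂ)) (lam : Fin m → ℂ)
    (hθ : ContDiff ℝ 1 θ) (hφ : ∀ j, ContDiff ℝ 1 (φ j))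
    (hmod : ∀ x, φ₁ x = r * Complex.exp (Complex.I * θ x))
    (heig₁ : ∀ t x, φ₁ (ψ t x) = Complex.exp (Complex.I * ω * t) * φ₁ x)
    (heig : ∀ j t x, φ j (ψ t x) = Complex.exp (lam j * t) * φ j x)
    (hdom : ∀ j, (lam j).re ≤ 0)
    (K : (Fin n → ℝ) → Set (Fin n → ℝ))
    (hK : ∀ x, K x =
      {δx | ∀ j, fderiv ℝ θ x δx - ‖fderiv ℝ (φ j) x δx‖ ≥ 0}) :
    ∀ t > (0:ℝ), ∀ x : Fin n → ℝ, ∀ δx ∈ K x, fderiv ℝ (ψ t) x δx ∈ K (ψ t x) := by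
  intro t ht x δx hδx
  rw [hK] at hδx ⊢
  intro j
  have hψt : DifferentiableAt ℝ (ψ t) x := (hψC t).differentiable one_ne_zero x
  have hθ_eq : fderiv ℝ θ (ψ t x) (fderiv ℝ (ψ t) x δx) = fderiv ℝ θ x δx :=
    fderiv_apply_fderiv_eq_of_eq_mul_exp_I_mul hmod hr.ne' (hθ.differentiable one_ne_zero) hψt
      (heig₁ t) δx
  have hφ_le : ‖fderiv ℝ (φ j) (ψ t x) (fderiv ℝ (ψ t) x δx)‖ ≤ ‖fderiv ℝ (φ j) x δx‖ :=
    norm_fderiv_apply_fderiv_le_of_comp_eq_mul ((hφ j).differentiable one_ne_zero) hψt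
      (heig j t) (norm_exp_mul_ofReal_le_one (hdom j) ht.le) δx
  linarith [hδx j]

/-- Cone invariance in the limit-cycle case: `φ₁` is a Koopman eigenfunction with purely
imaginary eigenvalue `iω`, constant nonzero modulus `r` and C¹ argument `θ`, and
`φⱼ` are eigenfunctions with `Re λⱼ ≤ 0`. Then the cone field
`K(x) = {δx | Dθ(x)δx − |Dφⱼ(x)δx| ≥ 0}` is invariant under the linearized flow. -/
theorem stmt6 {n m : ℕ} (f : (Fin n → ℝ) → (Fin n → ℝ)) (ψ : ℝ → (Fin n → ℝ) → (Fin n → ℝ))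
    (hf : ContDiff ℝ 2 f)
    (hflow : ∀ t x, HasDerivAt (fun s => ψ s x) (f (ψ t x)) t)
    (hψ0 : ∀ x, ψ 0 x = x)
    (hψC : ∀ t, ContDiff ℝ 1 (ψ t))
    (φ₁ : (Fin n → ℝ) → ℂ) (ω : ℝ) (θ : (Fin n → ℝ) → ℝ) (r : ℝ) (hr : 0 < r)
    (φ : Fin m → ((Fin n → ℝ) → ℂ)) (lam : Fin m → ℂ)
    (hφ₁ : ContDiff ℝ 1 φ₁) (hθ : ContDiff ℝ 1 θ) (hφ : ∀ j, ContDiff ℝ 1 (φ j))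
    (hmod : ∀ x, φ₁ x = r * Complex.exp (Complex.I * θ x))
    (heig₁ : ∀ t x, φ₁ (ψ t x) = Complex.exp (Complex.I * ω * t) * φ₁ x)
    (heig : ∀ j t x, φ j (ψ t x) = Complex.exp (lam j * t) * φ j x)
    (hdom : ∀ j, (lam j).re ≤ 0)
    (K : (Fin n → ℝ) → Set (Fin n → ℝ))
    (hK : ∀ x, K x =
      {δx | ∀ j, fderiv ℝ θ x δx - ‖fderiv ℝ (φ j) x δx‖ ≥ 0}) :
    ∀ t > (0:ℝ), ∀ x : Fin n → ℝ, ∀ δx ∈ K x, fderiv ℝ (ψ t) x δx ∈ K (ψ t x) :=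
  stmt6_general ψ hψC φ₁ ω θ r hr φ lam hθ hφ hmod heig₁ heig hdom K hK
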